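/- Let γ > 0, b > 0, p > 0, p₂ ≥ p, q_max > b + p/γ, and probability of call p_r ∈ [0, 1]. Define the expected profit as J(b̂, q̂) = p_r·[G(q₁*) - p·q₁* + p₂(b̂ - q₁*)₊ - p₂|q₁* - q̂|] + (1-p_r)·[G(q₀*) - p·max(b̂, q₀*)], where q₀*, q₁* are the second-stage optimal consumptions given reports (b̂, q̂). If 0 ≤ p_r ≤ p/(p₂ + p), then the optimal reported baseline is b̂* = b + p_r·p₂/(γ(1-p_r)), and if p/(p₂+p) ≤ p_r ≤ 1 then b̂* = q_max. In both cases the optimal reported reduced consumption is q̂* = max(b - p₂/γ, 0). -/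

import Mathlib

/-!
Write `x = b + p/γ` for the saturation point and `c = b - p₂/γ`, so that `G` is the saturating
quadratic utility `satUtility γ x` with marginal utility `γ (x - q)`, and `p = γ (x - b)`,
`p + p₂ = γ (x - c)`.

Whatever the reports with `0 ≤ q̂ ≤ b̂`, the called payoff is at most
`G q* - (p + p₂) q* + p₂ b̂` with `q* = max c 0`, since the bonus `p₂ (b̂ - q)₊ - p₂ |q - q̂|`
never exceeds `p₂ (b̂ - q₊)`; and the uncalled payoff is at most `G m - p m` with `m = max b̂ b`.
These bounds hold for every real `q`, which matters because `IsMaxOn` does not place the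
second-stage responses in `[0, q_max]`. Both are attained when `q̂ = q*` and `b ≤ b̂`.

This reduces the first stage to maximizing `p_r p₂ m + (1 - p_r) (G m - p m)` over
`m ∈ [b, q_max]`. Below the threshold this is again a saturating quadratic (with `γ` scaled by
`1 - p_r`) minus a linear term, maximized at `b + p_r p₂ / (γ (1 - p_r))`; above the threshold
it is nondecreasing.
-/

open Set

noncomputable section

def satUtility (γ x q : ℝ) : ℝ := if q ≤ x then γ * x * q - γ / 2 * q ^ 2 else γ / 2 * x ^ 2

def uncalledPayoff (G : ℝ → ℝ) (p bhat q : ℝ) : ℝ := G q - p * max bhat q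

def calledPayoff (G : ℝ → ℝ) (p p₂ bhat qhat q : ℝ) : ℝ :=
  G q - (p * q - p₂ * max (bhat - q) 0 + p₂ * |q - qhat|)

def expectedProfit (G : ℝ → ℝ) (p p₂ pr bhat qhat q₀ q₁ : ℝ) : ℝ :=
  pr * calledPayoff G p p₂ bhat qhat q₁ + (1 - pr) * uncalledPayoff G p bhat q₀

/-- The expected profit once both second-stage responses are optimal, as a function of
`m = max b̂ b`, for the optimal reduced-consumption report `qs`. -/
def reducedProfit (G : ℝ → ℝ) (p p₂ pr qs m : ℝ) : ℝ :=
  pr * (G qs - (p + p₂) * qs + p₂ * m) + (1 - pr) * (G m - p * m)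

end

section SatUtility

variable {γ x a q π : ℝ}

theorem satUtility_of_le (h : q ≤ x) : satUtility γ x q = γ * x * q - γ / 2 * q ^ 2 :=
  if_pos h

theorem satUtility_of_ge (h : x ≤ q) : satUtility γ x q = γ / 2 * x ^ 2 := by
  unfold satUtility
  split_ifs with h'
  · rw [le_antisymm h' h]; ring
  · rfl

theorem const_mul_satUtility (k : ℝ) : k * satUtility γ x q = satUtility (k * γ) x q := by
  unfold satUtility
  split_ifs <;> ring

theorem satUtility_sub_mul_le_of_le (hγ : 0 ≤ γ) (hax : a ≤ x) (hπ : π ≤ γ * (x - a))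
    (hqa : q ≤ a) : satUtility γ x q - π * q ≤ satUtility γ x a - π * a := by
  rw [satUtility_of_le hax, satUtility_of_le (hqa.trans hax)]
  nlinarith [mul_nonneg (sub_nonneg.2 hqa) (sub_nonneg.2 hπ),
    mul_nonneg hγ (sq_nonneg (a - q))]

theorem satUtility_sub_mul_le_of_ge (hγ : 0 ≤ γ) (hπ₀ : 0 ≤ π) (hπ : γ * (x - a) ≤ π)
    (haq : a ≤ q) : satUtility γ x q - π * q ≤ satUtility γ x a - π * a := by
  have quadratic : ∀ r, a ≤ r → r ≤ x →
      satUtility γ x r - π * r ≤ satUtility γ x a - π * a := by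
    intro r har hrx
    rw [satUtility_of_le hrx, satUtility_of_le (har.trans hrx)]
    nlinarith [mul_nonneg (sub_nonneg.2 har) (sub_nonneg.2 hπ),
      mul_nonneg hγ (sq_nonneg (r - a))]
  rcases le_total q x with hqx | hxq
  · exact quadratic q haq hqx
  rcases le_total a x with hax | hxa
  · have hsat : satUtility γ x q = satUtility γ x x := by
      rw [satUtility_of_ge hxq, satUtility_of_ge le_rfl]
    nlinarith [quadratic x hax le_rfl, mul_le_mul_of_nonneg_left hxq hπ₀]
  · rw [satUtility_of_ge hxa, satUtility_of_ge (hxa.trans haq)]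
    nlinarith [mul_le_mul_of_nonneg_left haq hπ₀]

theorem satUtility_sub_mul_le (hγ : 0 ≤ γ) (hax : a ≤ x) :
    satUtility γ x q - γ * (x - a) * q ≤ satUtility γ x a - γ * (x - a) * a := by
  rcases le_total q a with hqa | haq
  · exact satUtility_sub_mul_le_of_le hγ hax le_rfl hqa
  · exact satUtility_sub_mul_le_of_ge hγ (mul_nonneg hγ (sub_nonneg.2 hax)) le_rfl haq

theorem satUtility_le (hγ : 0 ≤ γ) : satUtility γ x q ≤ γ / 2 * x ^ 2 := by
  rcases le_total q x with hqx | hxq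
  · rw [satUtility_of_le hqx]
    nlinarith [mul_nonneg hγ (sq_nonneg (x - q))]
  · exact (satUtility_of_ge hxq).le

theorem satUtility_monotone (hγ : 0 ≤ γ) : Monotone (satUtility γ x) := by
  intro a q haq
  rcases le_total q x with hqx | hxq
  · simpa using satUtility_sub_mul_le_of_le (π := 0) hγ hqx
      (mul_nonneg hγ (sub_nonneg.2 hqx)) haq
  · exact (satUtility_of_ge hxq).symm ▸ satUtility_le hγ

end SatUtility

section SecondStage

variable {γ x b c p p₂ bhat qhat : ℝ}

theorem max_sub_abs_le (hqhat : 0 ≤ qhat) (hqb : qhat ≤ bhat) (q : ℝ) :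
    max (bhat - q) 0 - |q - qhat| ≤ bhat - max q 0 := by
  rcases max_cases (bhat - q) 0 with ⟨h₁, _⟩ | ⟨h₁, _⟩ <;>
  rcases max_cases q 0 with ⟨h₂, _⟩ | ⟨h₂, _⟩ <;>
  rcases abs_cases (q - qhat) with ⟨h₃, _⟩ | ⟨h₃, _⟩ <;>
  linarith

theorem uncalledPayoff_le (hγ : 0 ≤ γ) (hbx : b ≤ x) (hp : p = γ * (x - b)) (q : ℝ) :
    uncalledPayoff (satUtility γ x) p bhat q
      ≤ satUtility γ x (max bhat b) - p * max bhat b := by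
  have above_report : ∀ r, bhat ≤ r →
      satUtility γ x r - p * r ≤ satUtility γ x (max bhat b) - p * max bhat b := by
    intro r hr
    subst hp
    rcases le_total bhat b with hbhat | hbhat
    · rw [max_eq_right hbhat]
      exact satUtility_sub_mul_le hγ hbx
    · rw [max_eq_left hbhat]
      exact satUtility_sub_mul_le_of_ge hγ (mul_nonneg hγ (sub_nonneg.2 hbx))
        (by nlinarith) hr
  unfold uncalledPayoff
  rcases le_total q bhat with hq | hq
  · rw [max_eq_left hq]
    linarith [satUtility_monotone (x := x) hγ hq, above_report bhat le_rfl]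
  · rw [max_eq_right hq]
    exact above_report q hq

theorem calledPayoff_le (hγ : 0 ≤ γ) (hb : 0 ≤ b) (hbx : b ≤ x) (hcb : c ≤ b)
    (hp : p = γ * (x - b)) (hp₂ : p₂ = γ * (b - c)) (hqhat : 0 ≤ qhat) (hqb : qhat ≤ bhat)
    (q : ℝ) :
    calledPayoff (satUtility γ x) p p₂ bhat qhat q
      ≤ satUtility γ x (max c 0) - (p + p₂) * max c 0 + p₂ * bhat := by
  have hbonus : p₂ * max (bhat - q) 0 - p₂ * |q - qhat| ≤ p₂ * (bhat - max q 0) := by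
    rw [← mul_sub]
    exact mul_le_mul_of_nonneg_left (max_sub_abs_le hqhat hqb q)
      (hp₂ ▸ mul_nonneg hγ (sub_nonneg.2 hcb))
  have hnonneg : satUtility γ x q - p * q ≤ satUtility γ x (max q 0) - p * max q 0 := by
    rcases le_total q 0 with hq | hq
    · rw [max_eq_right hq]
      exact satUtility_sub_mul_le_of_le hγ (hb.trans hbx) (by nlinarith) hq
    · rw [max_eq_left hq]
  have hprice : p + p₂ = γ * (x - c) := by rw [hp, hp₂]; ring
  have hoptimal : satUtility γ x (max q 0) - (p + p₂) * max q 0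
      ≤ satUtility γ x (max c 0) - (p + p₂) * max c 0 := by
    rw [hprice]
    rcases le_total c 0 with hc | hc
    · rw [max_eq_right hc]
      exact satUtility_sub_mul_le_of_ge hγ (by nlinarith) (by nlinarith) (le_max_right q 0)
    · rw [max_eq_left hc]
      exact satUtility_sub_mul_le hγ (hcb.trans hbx)
  unfold calledPayoff
  linarith

theorem calledPayoff_self (G : ℝ → ℝ) (hqb : qhat ≤ bhat) :
    calledPayoff G p p₂ bhat qhat qhat = G qhat - (p + p₂) * qhat + p₂ * bhat := by
  rw [calledPayoff, sub_self, abs_zero, max_eq_left (sub_nonneg.2 hqb)]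
  ring

theorem uncalledPayoff_self (G : ℝ → ℝ) : uncalledPayoff G p bhat bhat = G bhat - p * bhat := by
  rw [uncalledPayoff, max_self]

end SecondStage

section FirstStage

variable {γ x b c p p₂ pr qmax qs : ℝ}

theorem expectedProfit_le (hγ : 0 ≤ γ) (hb : 0 ≤ b) (hbx : b ≤ x) (hcb : c ≤ b)
    (hp : p = γ * (x - b)) (hp₂ : p₂ = γ * (b - c)) (hpr₀ : 0 ≤ pr) (hpr₁ : pr ≤ 1)
    {bhat qhat : ℝ} (hqhat : 0 ≤ qhat) (hqb : qhat ≤ bhat) (q₀ q₁ : ℝ) :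
    expectedProfit (satUtility γ x) p p₂ pr bhat qhat q₀ q₁
      ≤ reducedProfit (satUtility γ x) p p₂ pr (max c 0) (max bhat b) := by
  have hbonus : p₂ * bhat ≤ p₂ * max bhat b :=
    mul_le_mul_of_nonneg_left (le_max_left _ _) (hp₂ ▸ mul_nonneg hγ (sub_nonneg.2 hcb))
  have hcalled := calledPayoff_le hγ hb hbx hcb hp hp₂ hqhat hqb q₁
  exact add_le_add (mul_le_mul_of_nonneg_left (by linarith) hpr₀)
    (mul_le_mul_of_nonneg_left (uncalledPayoff_le hγ hbx hp q₀) (sub_nonneg.2 hpr₁))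

theorem expectedProfit_eq (hγ : 0 ≤ γ) (hb : 0 ≤ b) (hbx : b ≤ x) (hcb : c ≤ b)
    (hp : p = γ * (x - b)) (hp₂ : p₂ = γ * (b - c)) {B q₀ q₁ : ℝ} (hbB : b ≤ B)
    (hBq : B ≤ qmax)
    (hq₀ : IsMaxOn (uncalledPayoff (satUtility γ x) p B) (Icc 0 qmax) q₀)
    (hq₁ : IsMaxOn (calledPayoff (satUtility γ x) p p₂ B (max c 0)) (Icc 0 qmax) q₁) :
    expectedProfit (satUtility γ x) p p₂ pr B (max c 0) q₀ q₁
      = reducedProfit (satUtility γ x) p p₂ pr (max c 0) B := by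
  have hqs : max c 0 ≤ b := max_le hcb hb
  have hcalled : calledPayoff (satUtility γ x) p p₂ B (max c 0) q₁
      = satUtility γ x (max c 0) - (p + p₂) * max c 0 + p₂ * B :=
    le_antisymm (calledPayoff_le hγ hb hbx hcb hp hp₂ (le_max_right c 0) (hqs.trans hbB) q₁)
      (calledPayoff_self _ (hqs.trans hbB) ▸ hq₁ ⟨le_max_right c 0, hqs.trans (hbB.trans hBq)⟩)
  have huncalled : uncalledPayoff (satUtility γ x) p B q₀ = satUtility γ x B - p * B :=
    le_antisymm (by simpa [max_eq_left hbB] using uncalledPayoff_le (bhat := B) hγ hbx hp q₀)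
      (uncalledPayoff_self _ ▸ hq₀ ⟨hb.trans hbB, hBq⟩)
  rw [expectedProfit, hcalled, huncalled, reducedProfit]

theorem isMaxOn_expectedProfit (hγ : 0 ≤ γ) (hb : 0 ≤ b) (hbx : b ≤ x) (hcb : c ≤ b)
    (hp : p = γ * (x - b)) (hp₂ : p₂ = γ * (b - c)) (hpr₀ : 0 ≤ pr) (hpr₁ : pr ≤ 1)
    {q₀ q₁ : ℝ → ℝ → ℝ}
    (hq₀ : ∀ bhat qhat, IsMaxOn (uncalledPayoff (satUtility γ x) p bhat) (Icc 0 qmax)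
      (q₀ bhat qhat))
    (hq₁ : ∀ bhat qhat, IsMaxOn (calledPayoff (satUtility γ x) p p₂ bhat qhat) (Icc 0 qmax)
      (q₁ bhat qhat))
    {B : ℝ} (hbB : b ≤ B) (hBq : B ≤ qmax)
    (hB : ∀ m ≤ qmax, reducedProfit (satUtility γ x) p p₂ pr (max c 0) m
      ≤ reducedProfit (satUtility γ x) p p₂ pr (max c 0) B) :
    IsMaxOn (fun r : ℝ × ℝ => expectedProfit (satUtility γ x) p p₂ pr r.1 r.2
        (q₀ r.1 r.2) (q₁ r.1 r.2))
      {r : ℝ × ℝ | 0 ≤ r.2 ∧ r.2 ≤ r.1 ∧ r.1 ≤ qmax} (B, max c 0) := by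
  rintro ⟨bhat, qhat⟩ ⟨hqhat, hqb, hbhat⟩
  exact (expectedProfit_le hγ hb hbx hcb hp hp₂ hpr₀ hpr₁ hqhat hqb _ _).trans
    ((hB _ (max_le hbhat (hbB.trans hBq))).trans
      (expectedProfit_eq hγ hb hbx hcb hp hp₂ hbB hBq (hq₀ _ _) (hq₁ _ _)).ge)

theorem reportedBaseline_le (hγ : 0 < γ) (hp : p = γ * (x - b)) (hpr : pr < 1)
    (hthr : pr * (p₂ + p) ≤ p) : b + pr * p₂ / (γ * (1 - pr)) ≤ x := by
  have hk : 0 < γ * (1 - pr) := mul_pos hγ (sub_pos.2 hpr)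
  rw [← le_sub_iff_add_le', div_le_iff₀ hk]
  nlinarith

theorem reducedProfit_le_of_le_threshold (hγ : 0 < γ) (hp : p = γ * (x - b)) (hpr : pr < 1)
    (hthr : pr * (p₂ + p) ≤ p) (m : ℝ) :
    reducedProfit (satUtility γ x) p p₂ pr qs m
      ≤ reducedProfit (satUtility γ x) p p₂ pr qs (b + pr * p₂ / (γ * (1 - pr))) := by
  have hBx := reportedBaseline_le hγ hp hpr hthr
  set B := b + pr * p₂ / (γ * (1 - pr)) with hB
  have hk : 0 < 1 - pr := sub_pos.2 hpr
  have hslope : (1 - pr) * γ * (x - B) = (1 - pr) * p - pr * p₂ := by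
    rw [hB, hp]
    field_simp
    ring
  have hnet := satUtility_sub_mul_le (q := m) (mul_nonneg hk.le hγ.le) hBx
  rw [hslope, ← const_mul_satUtility, ← const_mul_satUtility] at hnet
  unfold reducedProfit
  linarith

theorem reducedProfit_le_of_threshold_le (hγ : 0 ≤ γ) (hpr : pr ≤ 1)
    (hthr : p ≤ pr * (p₂ + p)) {m : ℝ} (hm : m ≤ qmax) :
    reducedProfit (satUtility γ x) p p₂ pr qs m
      ≤ reducedProfit (satUtility γ x) p p₂ pr qs qmax := by
  have hutility := mul_le_mul_of_nonneg_left (satUtility_monotone (x := x) hγ hm)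
    (sub_nonneg.2 hpr)
  have hlinear := mul_le_mul_of_nonneg_left hm (by linarith : 0 ≤ pr * p₂ - (1 - pr) * p)
  unfold reducedProfit
  linarith

end FirstStage

/-- first-stage optimal reports: bhat* = b + p_r·p₂/(γ(1-p_r)) below the
threshold p/(p₂+p), bhat* = q_max above it; qhat* = max(b - p₂/γ, 0) in both cases. -/
theorem stmt4 (γ b p p₂ qmax pr : ℝ) (hγ : 0 < γ) (hb : 0 < b) (hp : 0 < p)
    (hp₂ : p ≤ p₂) (hqmax : b + p / γ < qmax) (hpr : pr ∈ Set.Icc (0:ℝ) 1)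
    (G : ℝ → ℝ)
    (hG : ∀ q, G q = if q ≤ b + p / γ then -γ/2 * q^2 + (γ*b + p) * q
                     else p^2/(2*γ) + γ*b^2/2 + p*b)
    (q0 q1 : ℝ → ℝ → ℝ)
    (hq0 : ∀ bhat qhat, IsMaxOn (fun q => G q - p * max bhat q) (Set.Icc 0 qmax) (q0 bhat qhat))
    (hq1 : ∀ bhat qhat, IsMaxOn
      (fun q => G q - (p*q - p₂ * max (bhat - q) 0 + p₂ * |q - qhat|))
      (Set.Icc 0 qmax) (q1 bhat qhat))
    (J : ℝ → ℝ → ℝ)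
    (hJ : ∀ bhat qhat, J bhat qhat =
      pr * (G (q1 bhat qhat) - (p * q1 bhat qhat - p₂ * max (bhat - q1 bhat qhat) 0
              + p₂ * |q1 bhat qhat - qhat|))
      + (1 - pr) * (G (q0 bhat qhat) - p * max bhat (q0 bhat qhat))) :
    (pr ≤ p/(p₂+p) →
      IsMaxOn (fun x : ℝ × ℝ => J x.1 x.2)
        {x : ℝ × ℝ | 0 ≤ x.2 ∧ x.2 ≤ x.1 ∧ x.1 ≤ qmax}
        (b + pr*p₂/(γ*(1-pr)), max (b - p₂/γ) 0)) ∧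
    (p/(p₂+p) ≤ pr →
      IsMaxOn (fun x : ℝ × ℝ => J x.1 x.2)
        {x : ℝ × ℝ | 0 ≤ x.2 ∧ x.2 ≤ x.1 ∧ x.1 ≤ qmax}
        (qmax, max (b - p₂/γ) 0)) := by
  obtain ⟨hpr₀, hpr₁⟩ := hpr
  obtain ⟨x, hx⟩ : ∃ x, x = b + p / γ := ⟨_, rfl⟩
  obtain ⟨c, hc⟩ : ∃ c, c = b - p₂ / γ := ⟨_, rfl⟩
  have hpx : p = γ * (x - b) := by rw [hx]; field_simp; ring
  have hpc : p₂ = γ * (b - c) := by rw [hc]; field_simp; ring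
  have hbx : b ≤ x := by nlinarith
  have hcb : c ≤ b := by nlinarith
  have hGx : G = satUtility γ x := funext fun q => by
    rw [hG, satUtility, ← hx, hpx]
    split_ifs <;> field_simp <;> ring
  subst hGx
  have hJx : (fun r : ℝ × ℝ => J r.1 r.2) = fun r => expectedProfit (satUtility γ x) p p₂ pr
      r.1 r.2 (q0 r.1 r.2) (q1 r.1 r.2) := funext fun r => hJ r.1 r.2
  rw [← hx] at hqmax
  rw [← hc, hJx]
  have hmax B := isMaxOn_expectedProfit (B := B) hγ.le hb.le hbx hcb hpx hpc hpr₀ hpr₁ hq0 hq1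
  have hsum : 0 < p₂ + p := by linarith
  refine ⟨fun hthr => ?_, fun hthr => ?_⟩
  · rw [le_div_iff₀ hsum] at hthr
    have hpr : pr < 1 := by nlinarith
    refine hmax _ ?_ ((reportedBaseline_le hγ hpx hpr hthr).trans hqmax.le)
      fun m _ => reducedProfit_le_of_le_threshold hγ hpx hpr hthr m
    exact le_add_of_nonneg_right
      (div_nonneg (mul_nonneg hpr₀ (hp.le.trans hp₂)) (mul_pos hγ (sub_pos.2 hpr)).le)
  · rw [div_le_iff₀ hsum] at hthr
    exact hmax qmax (hbx.trans hqmax.le) le_rfl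
      fun m hm => reducedProfit_le_of_threshold_le hγ.le hpr₁ hthr hm
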